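/- If two equi-recursive types are coinductively equal, then for every natural number n their backtranslation types coincide: if τ ≈ σ then BtT(n; τ) = BtT(n; σ), where BtT(n; τ) is the n-approximation backtranslation type defined by BtT(0; τ) = Unit; BtT(n+1; Unit) = Unit ⊎ Unit; BtT(n+1; Bool) = Bool ⊎ Unit; BtT(n+1; τ→τ') = (BtT(n;τ) → BtT(n;τ')) ⊎ Unit; BtT(n+1; τ×τ') = (BtT(n;τ) × BtT(n;τ')) ⊎ Unit; BtT(n+1; τ⊎τ') = (BtT(n;τ) ⊎ BtT(n;τ')) ⊎ Unit; and BtT(n+1; μα.τ') = BtT(n+1; τ'[μα.τ'/α]). -/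

import Mathlib

set_option autoImplicit true

/-- Types of the recursive-type calculi (de Bruijn indices for type variables). -/
inductive Ty : Type
  | unit : Ty
  | bool : Ty
  | arrow : Ty → Ty → Ty
  | prod : Ty → Ty → Ty
  | sum : Ty → Ty → Ty
  | mu : Ty → Ty
  | tvar : ℕ → Ty
  deriving DecidableEq

namespace Ty

def shift : ℕ → Ty → Ty
  | _, unit => unit
  | _, bool => bool
  | c, arrow a b => arrow (shift c a) (shift c b)
  | c, prod a b => prod (shift c a) (shift c b)
  | c, sum a b => sum (shift c a) (shift c b)
  | c, mu a => mu (shift (c+1) a)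
  | c, tvar n => if n < c then tvar n else tvar (n+1)

def subst : ℕ → Ty → Ty → Ty
  | _, _, unit => unit
  | _, _, bool => bool
  | k, s, arrow a b => arrow (subst k s a) (subst k s b)
  | k, s, prod a b => prod (subst k s a) (subst k s b)
  | k, s, sum a b => sum (subst k s a) (subst k s b)
  | k, s, mu a => mu (subst (k+1) (shift 0 s) a)
  | k, s, tvar n => if n = k then s else if k < n then tvar (n-1) else tvar n

/-- The unfolding  τ[μα.τ/α]  of the recursive type μα.τ with body τ. -/
def unfoldTy (body : Ty) : Ty := subst 0 (mu body) body

def FVBelow : ℕ → Ty → Prop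
  | _, unit => True
  | _, bool => True
  | k, arrow a b => FVBelow k a ∧ FVBelow k b
  | k, prod a b => FVBelow k a ∧ FVBelow k b
  | k, sum a b => FVBelow k a ∧ FVBelow k b
  | k, mu a => FVBelow (k+1) a
  | k, tvar n => n < k

def Closed (τ : Ty) : Prop := FVBelow 0 τ

/-- `Guarded α τ`: the type variable `α` does not occur at the top level of `τ`
    (i.e. it is guarded by one of the constructors →, ×, ⊎). -/
def Guarded : ℕ → Ty → Prop
  | α, mu a => Guarded (α+1) a
  | α, tvar n => n ≠ α
  | _, _ => True

def Contractive : Ty → Prop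
  | arrow a b => Contractive a ∧ Contractive b
  | prod a b => Contractive a ∧ Contractive b
  | sum a b => Contractive a ∧ Contractive b
  | mu a => Guarded 0 a ∧ Contractive a
  | _ => True

/-- Leading-mu-count. -/
def lMuCount : Ty → ℕ
  | mu a => lMuCount a + 1
  | _ => 0

end Ty

/-- Repeatedly unfold leading μs (with explicit fuel). -/
def unfoldMus : ℕ → Ty → Ty
  | 0, τ => τ
  | k+1, Ty.mu a => unfoldMus k (Ty.unfoldTy a)
  | _+1, τ => τ

/-- One-step functional for the coinductive type-equality relation. -/
def TyEqF (R : Ty → Ty → Prop) (a b : Ty) : Prop :=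
  (a = Ty.unit ∧ b = Ty.unit) ∨ (a = Ty.bool ∧ b = Ty.bool) ∨
  (∃ n, a = Ty.tvar n ∧ b = Ty.tvar n) ∨
  (∃ a1 a2 b1 b2, a = Ty.arrow a1 a2 ∧ b = Ty.arrow b1 b2 ∧ R a1 b1 ∧ R a2 b2) ∨
  (∃ a1 a2 b1 b2, a = Ty.prod a1 a2 ∧ b = Ty.prod b1 b2 ∧ R a1 b1 ∧ R a2 b2) ∨
  (∃ a1 a2 b1 b2, a = Ty.sum a1 a2 ∧ b = Ty.sum b1 b2 ∧ R a1 b1 ∧ R a2 b2) ∨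
  (∃ a', a = Ty.mu a' ∧ R (Ty.unfoldTy a') b) ∨
  (∃ b', b = Ty.mu b' ∧ R a (Ty.unfoldTy b'))

/-- Coinductive type equality ≈, as the greatest fixpoint of `TyEqF`. -/
def TyEq (a b : Ty) : Prop :=
  ∃ R : Ty → Ty → Prop, (∀ x y, R x y → TyEqF R x y) ∧ R a b

/-- Terms (common syntax: fix, fold and unfold included). -/
inductive Tm : Type
  | unit : Tm
  | tru : Tm
  | fls : Tm
  | var : ℕ → Tm
  | lam : Ty → Tm → Tm
  | app : Tm → Tm → Tm
  | pair : Tm → Tm → Tm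
  | fst : Tm → Tm
  | snd : Tm → Tm
  | inl : Tm → Tm
  | inr : Tm → Tm
  | caseof : Tm → Tm → Tm → Tm
  | ifte : Tm → Tm → Tm → Tm
  | seq : Tm → Tm → Tm
  | fix : Ty → Tm → Tm
  | fold : Ty → Tm → Tm
  | unfold : Ty → Tm → Tm

inductive Value : Tm → Prop
  | unit : Value Tm.unit
  | tru : Value Tm.tru
  | fls : Value Tm.fls
  | lam : Value (Tm.lam τ t)
  | pair : Value v1 → Value v2 → Value (Tm.pair v1 v2)
  | inl : Value v → Value (Tm.inl v)
  | inr : Value v → Value (Tm.inr v)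
  | fold : Value v → Value (Tm.fold τ v)

/-- Size of a term: number of AST nodes, ignoring bodies of lambdas. -/
def size : Tm → ℕ
  | Tm.unit => 1
  | Tm.tru => 1
  | Tm.fls => 1
  | Tm.var _ => 1
  | Tm.lam _ _ => 1
  | Tm.app a b => size a + size b + 1
  | Tm.pair a b => size a + size b + 1
  | Tm.fst a => size a + 1
  | Tm.snd a => size a + 1
  | Tm.inl a => size a + 1
  | Tm.inr a => size a + 1
  | Tm.caseof a b c => size a + size b + size c + 1
  | Tm.ifte a b c => size a + size b + size c + 1
  | Tm.seq a b => size a + size b + 1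
  | Tm.fix _ a => size a + 1
  | Tm.fold _ a => size a + 1
  | Tm.unfold _ a => size a + 1

namespace Tm

def shift : ℕ → Tm → Tm
  | _, unit => unit
  | _, tru => tru
  | _, fls => fls
  | c, var n => if n < c then var n else var (n+1)
  | c, lam τ t => lam τ (shift (c+1) t)
  | c, app a b => app (shift c a) (shift c b)
  | c, pair a b => pair (shift c a) (shift c b)
  | c, fst a => fst (shift c a)
  | c, snd a => snd (shift c a)
  | c, inl a => inl (shift c a)
  | c, inr a => inr (shift c a)
  | c, caseof a b d => caseof (shift c a) (shift (c+1) b) (shift (c+1) d)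
  | c, ifte a b d => ifte (shift c a) (shift c b) (shift c d)
  | c, seq a b => seq (shift c a) (shift c b)
  | c, fix τ a => fix τ (shift c a)
  | c, fold τ a => fold τ (shift c a)
  | c, unfold τ a => unfold τ (shift c a)

def subst : ℕ → Tm → Tm → Tm
  | _, _, unit => unit
  | _, _, tru => tru
  | _, _, fls => fls
  | k, s, var n => if n = k then s else if k < n then var (n-1) else var n
  | k, s, lam τ t => lam τ (subst (k+1) (shift 0 s) t)
  | k, s, app a b => app (subst k s a) (subst k s b)
  | k, s, pair a b => pair (subst k s a) (subst k s b)
  | k, s, fst a => fst (subst k s a)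
  | k, s, snd a => snd (subst k s a)
  | k, s, inl a => inl (subst k s a)
  | k, s, inr a => inr (subst k s a)
  | k, s, caseof a b d => caseof (subst k s a) (subst (k+1) (shift 0 s) b) (subst (k+1) (shift 0 s) d)
  | k, s, ifte a b d => ifte (subst k s a) (subst k s b) (subst k s d)
  | k, s, seq a b => seq (subst k s a) (subst k s b)
  | k, s, fix τ a => fix τ (subst k s a)
  | k, s, fold τ a => fold τ (subst k s a)
  | k, s, unfold τ a => unfold τ (subst k s a)

def FVBelow : ℕ → Tm → Prop
  | _, unit => True
  | _, tru => True
  | _, fls => True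
  | k, var n => n < k
  | k, lam _ t => FVBelow (k+1) t
  | k, app a b => FVBelow k a ∧ FVBelow k b
  | k, pair a b => FVBelow k a ∧ FVBelow k b
  | k, fst a => FVBelow k a
  | k, snd a => FVBelow k a
  | k, inl a => FVBelow k a
  | k, inr a => FVBelow k a
  | k, caseof a b d => FVBelow k a ∧ FVBelow (k+1) b ∧ FVBelow (k+1) d
  | k, ifte a b d => FVBelow k a ∧ FVBelow k b ∧ FVBelow k d
  | k, seq a b => FVBelow k a ∧ FVBelow k b
  | k, fix _ a => FVBelow k a
  | k, fold _ a => FVBelow k a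
  | k, unfold _ a => FVBelow k a

end Tm

/-- `subst0 t v`: substitute `v` for de Bruijn variable 0 in `t`. -/
def subst0 (t v : Tm) : Tm := Tm.subst 0 v t

/-- Primitive reductions. -/
inductive Prim : Tm → Tm → Prop
  | beta : Value v → Prim (Tm.app (Tm.lam τ t) v) (subst0 t v)
  | fstR : Value v1 → Value v2 → Prim (Tm.fst (Tm.pair v1 v2)) v1
  | sndR : Value v1 → Value v2 → Prim (Tm.snd (Tm.pair v1 v2)) v2
  | seqR : Prim (Tm.seq Tm.unit t) t
  | caseL : Value v → Prim (Tm.caseof (Tm.inl v) t1 t2) (subst0 t1 v)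
  | caseR : Value v → Prim (Tm.caseof (Tm.inr v) t1 t2) (subst0 t2 v)
  | iteT : Prim (Tm.ifte Tm.tru t1 t2) t1
  | iteF : Prim (Tm.ifte Tm.fls t1 t2) t2
  | fixBeta : Prim (Tm.fix τ (Tm.lam σ t)) (subst0 t (Tm.fix τ (Tm.lam σ t)))
  | unfoldFold : Value v → Prim (Tm.unfold τ (Tm.fold τ v)) v

/-- Small-step call-by-value reduction (contextual closure of `Prim`). -/
inductive Step : Tm → Tm → Prop
  | prim : Prim t t' → Step t t'
  | app1 : Step t1 t1' → Step (Tm.app t1 t2) (Tm.app t1' t2)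
  | app2 : Value v → Step t2 t2' → Step (Tm.app v t2) (Tm.app v t2')
  | pair1 : Step t1 t1' → Step (Tm.pair t1 t2) (Tm.pair t1' t2)
  | pair2 : Value v → Step t2 t2' → Step (Tm.pair v t2) (Tm.pair v t2')
  | fstC : Step t t' → Step (Tm.fst t) (Tm.fst t')
  | sndC : Step t t' → Step (Tm.snd t) (Tm.snd t')
  | inlC : Step t t' → Step (Tm.inl t) (Tm.inl t')
  | inrC : Step t t' → Step (Tm.inr t) (Tm.inr t')
  | caseC : Step t t' → Step (Tm.caseof t t1 t2) (Tm.caseof t' t1 t2)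
  | iteC : Step t t' → Step (Tm.ifte t t1 t2) (Tm.ifte t' t1 t2)
  | seqC : Step t t' → Step (Tm.seq t t2) (Tm.seq t' t2)
  | fixC : Step t t' → Step (Tm.fix τ t) (Tm.fix τ t')
  | foldC : Step t t' → Step (Tm.fold τ t) (Tm.fold τ t')
  | unfoldC : Step t t' → Step (Tm.unfold τ t) (Tm.unfold τ t')

inductive StepN : ℕ → Tm → Tm → Prop
  | refl : StepN 0 t t
  | step : Step t t' → StepN n t' u → StepN (n+1) t u

/-- Standard termination: `t` reduces to a value in some number of steps. -/
def Terminates (t : Tm) : Prop := ∃ n v, StepN n t v ∧ Value v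

/-- Size-bounded termination (ShrinkTerm):  t ⇓ₛ(n) v. -/
inductive ShrinkTm : Tm → ℕ → Tm → Prop
  | val : Value v → size v ≤ n → ShrinkTm v n v
  | step : Step t t' → ShrinkTm t' n v → size t ≤ n → ShrinkTm t (n+1) v

/-- Typing for the iso-recursive STLC. -/
inductive HasTypeI : List Ty → Tm → Ty → Prop
  | unit : HasTypeI Γ Tm.unit Ty.unit
  | tru : HasTypeI Γ Tm.tru Ty.bool
  | fls : HasTypeI Γ Tm.fls Ty.bool
  | var : Γ[(n : ℕ)]? = some τ → HasTypeI Γ (Tm.var n) τ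
  | lam : Ty.Closed τ → HasTypeI (τ :: Γ) t σ → HasTypeI Γ (Tm.lam τ t) (Ty.arrow τ σ)
  | app : HasTypeI Γ t1 (Ty.arrow τ σ) → HasTypeI Γ t2 τ → HasTypeI Γ (Tm.app t1 t2) σ
  | pair : HasTypeI Γ t1 τ → HasTypeI Γ t2 σ → HasTypeI Γ (Tm.pair t1 t2) (Ty.prod τ σ)
  | fst : HasTypeI Γ t (Ty.prod τ σ) → HasTypeI Γ (Tm.fst t) τ
  | snd : HasTypeI Γ t (Ty.prod τ σ) → HasTypeI Γ (Tm.snd t) σ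
  | inl : HasTypeI Γ t τ → HasTypeI Γ (Tm.inl t) (Ty.sum τ σ)
  | inr : HasTypeI Γ t σ → HasTypeI Γ (Tm.inr t) (Ty.sum τ σ)
  | caseof : HasTypeI Γ t (Ty.sum τ1 τ2) → HasTypeI (τ1 :: Γ) t1 τ → HasTypeI (τ2 :: Γ) t2 τ →
      HasTypeI Γ (Tm.caseof t t1 t2) τ
  | ifte : HasTypeI Γ t Ty.bool → HasTypeI Γ t1 τ → HasTypeI Γ t2 τ →
      HasTypeI Γ (Tm.ifte t t1 t2) τ
  | seq : HasTypeI Γ t1 Ty.unit → HasTypeI Γ t2 τ → HasTypeI Γ (Tm.seq t1 t2) τ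
  | fold : HasTypeI Γ t (Ty.unfoldTy τ) → HasTypeI Γ (Tm.fold (Ty.mu τ) t) (Ty.mu τ)
  | unfold : HasTypeI Γ t (Ty.mu τ) → HasTypeI Γ (Tm.unfold (Ty.mu τ) t) (Ty.unfoldTy τ)

/-- Typing for the STLC with fix. -/
inductive HasTypeF : List Ty → Tm → Ty → Prop
  | unit : HasTypeF Γ Tm.unit Ty.unit
  | tru : HasTypeF Γ Tm.tru Ty.bool
  | fls : HasTypeF Γ Tm.fls Ty.bool
  | var : Γ[(n : ℕ)]? = some τ → HasTypeF Γ (Tm.var n) τ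
  | lam : Ty.Closed τ → HasTypeF (τ :: Γ) t σ → HasTypeF Γ (Tm.lam τ t) (Ty.arrow τ σ)
  | app : HasTypeF Γ t1 (Ty.arrow τ σ) → HasTypeF Γ t2 τ → HasTypeF Γ (Tm.app t1 t2) σ
  | pair : HasTypeF Γ t1 τ → HasTypeF Γ t2 σ → HasTypeF Γ (Tm.pair t1 t2) (Ty.prod τ σ)
  | fst : HasTypeF Γ t (Ty.prod τ σ) → HasTypeF Γ (Tm.fst t) τ
  | snd : HasTypeF Γ t (Ty.prod τ σ) → HasTypeF Γ (Tm.snd t) σ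
  | inl : HasTypeF Γ t τ → HasTypeF Γ (Tm.inl t) (Ty.sum τ σ)
  | inr : HasTypeF Γ t σ → HasTypeF Γ (Tm.inr t) (Ty.sum τ σ)
  | caseof : HasTypeF Γ t (Ty.sum τ1 τ2) → HasTypeF (τ1 :: Γ) t1 τ → HasTypeF (τ2 :: Γ) t2 τ →
      HasTypeF Γ (Tm.caseof t t1 t2) τ
  | ifte : HasTypeF Γ t Ty.bool → HasTypeF Γ t1 τ → HasTypeF Γ t2 τ →
      HasTypeF Γ (Tm.ifte t t1 t2) τ
  | seq : HasTypeF Γ t1 Ty.unit → HasTypeF Γ t2 τ → HasTypeF Γ (Tm.seq t1 t2) τ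
  | fix : HasTypeF Γ t (Ty.arrow (Ty.arrow τ1 τ2) (Ty.arrow τ1 τ2)) →
      HasTypeF Γ (Tm.fix (Ty.arrow τ1 τ2) t) (Ty.arrow τ1 τ2)

/-- Typing for the (coinductive) equi-recursive STLC, with the conversion rule. -/
inductive HasTypeE : List Ty → Tm → Ty → Prop
  | unit : HasTypeE Γ Tm.unit Ty.unit
  | tru : HasTypeE Γ Tm.tru Ty.bool
  | fls : HasTypeE Γ Tm.fls Ty.bool
  | var : Γ[(n : ℕ)]? = some τ → HasTypeE Γ (Tm.var n) τ
  | lam : Ty.Closed τ → HasTypeE (τ :: Γ) t σ → HasTypeE Γ (Tm.lam τ t) (Ty.arrow τ σ)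
  | app : HasTypeE Γ t1 (Ty.arrow τ σ) → HasTypeE Γ t2 τ → HasTypeE Γ (Tm.app t1 t2) σ
  | pair : HasTypeE Γ t1 τ → HasTypeE Γ t2 σ → HasTypeE Γ (Tm.pair t1 t2) (Ty.prod τ σ)
  | fst : HasTypeE Γ t (Ty.prod τ σ) → HasTypeE Γ (Tm.fst t) τ
  | snd : HasTypeE Γ t (Ty.prod τ σ) → HasTypeE Γ (Tm.snd t) σ
  | inl : HasTypeE Γ t τ → HasTypeE Γ (Tm.inl t) (Ty.sum τ σ)
  | inr : HasTypeE Γ t σ → HasTypeE Γ (Tm.inr t) (Ty.sum τ σ)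
  | caseof : HasTypeE Γ t (Ty.sum τ1 τ2) → HasTypeE (τ1 :: Γ) t1 τ → HasTypeE (τ2 :: Γ) t2 τ →
      HasTypeE Γ (Tm.caseof t t1 t2) τ
  | ifte : HasTypeE Γ t Ty.bool → HasTypeE Γ t1 τ → HasTypeE Γ t2 τ →
      HasTypeE Γ (Tm.ifte t t1 t2) τ
  | seq : HasTypeE Γ t1 Ty.unit → HasTypeE Γ t2 τ → HasTypeE Γ (Tm.seq t1 t2) τ
  | conv : HasTypeE Γ t τ → TyEq τ σ → HasTypeE Γ t σ

/-- Erasure of fold/unfold annotations (canonical compiler iso → equi). -/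
def eraseTm : Tm → Tm
  | Tm.unit => Tm.unit
  | Tm.tru => Tm.tru
  | Tm.fls => Tm.fls
  | Tm.var n => Tm.var n
  | Tm.lam τ t => Tm.lam τ (eraseTm t)
  | Tm.app a b => Tm.app (eraseTm a) (eraseTm b)
  | Tm.pair a b => Tm.pair (eraseTm a) (eraseTm b)
  | Tm.fst a => Tm.fst (eraseTm a)
  | Tm.snd a => Tm.snd (eraseTm a)
  | Tm.inl a => Tm.inl (eraseTm a)
  | Tm.inr a => Tm.inr (eraseTm a)
  | Tm.caseof a b c => Tm.caseof (eraseTm a) (eraseTm b) (eraseTm c)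
  | Tm.ifte a b c => Tm.ifte (eraseTm a) (eraseTm b) (eraseTm c)
  | Tm.seq a b => Tm.seq (eraseTm a) (eraseTm b)
  | Tm.fix τ a => Tm.fix τ (eraseTm a)
  | Tm.fold _ a => eraseTm a
  | Tm.unfold _ a => eraseTm a
/-- Backtranslation type for equi-recursive target types (μ-case unfolds
    without decrementing the step index). -/
def BtTe : ℕ → Ty → Ty
  | 0, _ => Ty.unit
  | n+1, τ =>
    match unfoldMus (Ty.lMuCount τ) τ with
    | Ty.unit => Ty.sum Ty.unit Ty.unit
    | Ty.bool => Ty.sum Ty.bool Ty.unit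
    | Ty.arrow a b => Ty.sum (Ty.arrow (BtTe n a) (BtTe n b)) Ty.unit
    | Ty.prod a b => Ty.sum (Ty.prod (BtTe n a) (BtTe n b)) Ty.unit
    | Ty.sum a b => Ty.sum (Ty.sum (BtTe n a) (BtTe n b)) Ty.unit
    | Ty.mu _ => Ty.unit
    | Ty.tvar _ => Ty.unit

/-- Backtranslation type for iso-recursive target types (μ-case decrements n). -/
def BtTi : ℕ → Ty → Ty
  | 0, _ => Ty.unit
  | n+1, Ty.unit => Ty.sum Ty.unit Ty.unit
  | n+1, Ty.bool => Ty.sum Ty.bool Ty.unit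
  | n+1, Ty.arrow a b => Ty.sum (Ty.arrow (BtTi n a) (BtTi n b)) Ty.unit
  | n+1, Ty.prod a b => Ty.sum (Ty.prod (BtTi n a) (BtTi n b)) Ty.unit
  | n+1, Ty.sum a b => Ty.sum (Ty.sum (BtTi n a) (BtTi n b)) Ty.unit
  | n+1, Ty.mu a => Ty.sum (BtTi n (Ty.unfoldTy a)) Ty.unit
  | _+1, Ty.tvar _ => Ty.unit

/-- A type of the plain simply-typed lambda calculus: no μ and no type variables. -/
def MuFree : Ty → Prop
  | Ty.unit => True
  | Ty.bool => True
  | Ty.arrow a b => MuFree a ∧ MuFree b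
  | Ty.prod a b => MuFree a ∧ MuFree b
  | Ty.sum a b => MuFree a ∧ MuFree b
  | Ty.mu _ => False
  | Ty.tvar _ => False

namespace Ty

theorem fvBelow_shift : ∀ (a : Ty) (c k : ℕ), c ≤ k → FVBelow k a → FVBelow (k+1) (shift c a)
  | unit, _, _, _, _ => trivial
  | bool, _, _, _, _ => trivial
  | arrow a b, c, k, hck, h =>
      ⟨fvBelow_shift a c k hck h.1, fvBelow_shift b c k hck h.2⟩
  | prod a b, c, k, hck, h =>
      ⟨fvBelow_shift a c k hck h.1, fvBelow_shift b c k hck h.2⟩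
  | sum a b, c, k, hck, h =>
      ⟨fvBelow_shift a c k hck h.1, fvBelow_shift b c k hck h.2⟩
  | mu a, c, k, hck, h => fvBelow_shift a (c+1) (k+1) (by omega) h
  | tvar n, c, k, hck, h => by
      simp only [shift]
      split <;> simp only [FVBelow] at h ⊢ <;> omega

theorem fvBelow_subst : ∀ (a : Ty) (k : ℕ) (s : Ty),
    FVBelow (k+1) a → FVBelow k s → FVBelow k (subst k s a)
  | unit, _, _, _, _ => trivial
  | bool, _, _, _, _ => trivial
  | arrow a b, k, s, h, hs =>
      ⟨fvBelow_subst a k s h.1 hs, fvBelow_subst b k s h.2 hs⟩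
  | prod a b, k, s, h, hs =>
      ⟨fvBelow_subst a k s h.1 hs, fvBelow_subst b k s h.2 hs⟩
  | sum a b, k, s, h, hs =>
      ⟨fvBelow_subst a k s h.1 hs, fvBelow_subst b k s h.2 hs⟩
  | mu a, k, s, h, hs =>
      fvBelow_subst a (k+1) (shift 0 s) h (fvBelow_shift s 0 k (Nat.zero_le _) hs)
  | tvar n, k, s, h, hs => by
      simp only [FVBelow] at h
      simp only [subst]
      split
      · exact hs
      · split <;> simp only [FVBelow] <;> omega

theorem guarded_shift_lt : ∀ (a : Ty) (α c : ℕ), α < c → Guarded α a → Guarded α (shift c a)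
  | unit, _, _, _, _ => trivial
  | bool, _, _, _, _ => trivial
  | arrow _ _, _, _, _, _ => trivial
  | prod _ _, _, _, _, _ => trivial
  | sum _ _, _, _, _, _ => trivial
  | mu a, α, c, h, hg => guarded_shift_lt a (α+1) (c+1) (by omega) hg
  | tvar n, α, c, h, hg => by
      simp only [shift]
      split <;> simp only [Guarded] <;> simp only [Guarded] at hg <;> omega

theorem guarded_shift_succ : ∀ (a : Ty) (α c : ℕ), c ≤ α → Guarded α a → Guarded (α+1) (shift c a)
  | unit, _, _, _, _ => trivial
  | bool, _, _, _, _ => trivial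
  | arrow _ _, _, _, _, _ => trivial
  | prod _ _, _, _, _, _ => trivial
  | sum _ _, _, _, _, _ => trivial
  | mu a, α, c, h, hg => guarded_shift_succ a (α+1) (c+1) (by omega) hg
  | tvar n, α, c, h, hg => by
      simp only [shift]
      split <;> simp only [Guarded] <;> simp only [Guarded] at hg <;> omega

theorem guarded_shift_self : ∀ (a : Ty) (c : ℕ), Guarded c (shift c a)
  | unit, _ => trivial
  | bool, _ => trivial
  | arrow _ _, _ => trivial
  | prod _ _, _ => trivial
  | sum _ _, _ => trivial
  | mu a, c => guarded_shift_self a (c+1)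
  | tvar n, c => by
      simp only [shift]
      split <;> simp only [Guarded] <;> omega

theorem guarded_subst : ∀ (a : Ty) (α k : ℕ) (s : Ty),
    Guarded α a → FVBelow (k+1) a → Guarded α s → Guarded α (subst k s a)
  | unit, _, _, _, _, _, _ => trivial
  | bool, _, _, _, _, _, _ => trivial
  | arrow _ _, _, _, _, _, _, _ => trivial
  | prod _ _, _, _, _, _, _, _ => trivial
  | sum _ _, _, _, _, _, _, _ => trivial
  | mu a, α, k, s, hg, hfv, hgs =>
      guarded_subst a (α+1) (k+1) (shift 0 s) hg hfv
        (guarded_shift_succ s α 0 (Nat.zero_le _) hgs)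
  | tvar n, α, k, s, hg, hfv, hgs => by
      simp only [Guarded] at hg
      simp only [FVBelow] at hfv
      simp only [subst]
      split
      · exact hgs
      · split
        · omega
        · simp only [Guarded]; omega

theorem contractive_shift : ∀ (a : Ty) (c : ℕ), Contractive a → Contractive (shift c a)
  | unit, _, _ => trivial
  | bool, _, _ => trivial
  | arrow a b, c, h => ⟨contractive_shift a c h.1, contractive_shift b c h.2⟩
  | prod a b, c, h => ⟨contractive_shift a c h.1, contractive_shift b c h.2⟩
  | sum a b, c, h => ⟨contractive_shift a c h.1, contractive_shift b c h.2⟩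
  | mu a, c, h => ⟨guarded_shift_lt a 0 (c+1) (by omega) h.1, contractive_shift a (c+1) h.2⟩
  | tvar n, c, h => by
      simp only [shift]; split <;> trivial

theorem contractive_subst : ∀ (a : Ty) (k : ℕ) (s : Ty),
    Contractive a → FVBelow (k+1) a → Contractive s → FVBelow k s → Contractive (subst k s a)
  | unit, _, _, _, _, _, _ => trivial
  | bool, _, _, _, _, _, _ => trivial
  | arrow a b, k, s, h, hfv, hcs, hfs =>
      ⟨contractive_subst a k s h.1 hfv.1 hcs hfs, contractive_subst b k s h.2 hfv.2 hcs hfs⟩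
  | prod a b, k, s, h, hfv, hcs, hfs =>
      ⟨contractive_subst a k s h.1 hfv.1 hcs hfs, contractive_subst b k s h.2 hfv.2 hcs hfs⟩
  | sum a b, k, s, h, hfv, hcs, hfs =>
      ⟨contractive_subst a k s h.1 hfv.1 hcs hfs, contractive_subst b k s h.2 hfv.2 hcs hfs⟩
  | mu a, k, s, h, hfv, hcs, hfs =>
      ⟨guarded_subst a 0 (k+1) (shift 0 s) h.1 hfv (guarded_shift_self s 0),
       contractive_subst a (k+1) (shift 0 s) h.2 hfv (contractive_shift s 0 hcs)
         (fvBelow_shift s 0 k (Nat.zero_le _) hfs)⟩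
  | tvar n, k, s, h, hfv, hcs, hfs => by
      simp only [subst]
      split
      · exact hcs
      · split <;> trivial

theorem lMuCount_subst : ∀ (a : Ty) (k : ℕ) (s : Ty),
    Guarded k a → lMuCount (subst k s a) = lMuCount a
  | unit, _, _, _ => rfl
  | bool, _, _, _ => rfl
  | arrow _ _, _, _, _ => rfl
  | prod _ _, _, _, _ => rfl
  | sum _ _, _, _, _ => rfl
  | mu a, k, s, hg => by
      simp only [subst, lMuCount]
      rw [lMuCount_subst a (k+1) (shift 0 s) hg]
  | tvar n, k, s, hg => by
      simp only [Guarded] at hg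
      simp only [subst]
      rw [if_neg hg]
      split <;> rfl

theorem closed_unfoldTy {a : Ty} (h : Closed (mu a)) : Closed (unfoldTy a) :=
  fvBelow_subst a 0 (mu a) h h

theorem contractive_unfoldTy {a : Ty} (hc : Contractive (mu a)) (hcl : Closed (mu a)) :
    Contractive (unfoldTy a) :=
  contractive_subst a 0 (mu a) hc.2 hcl hc hcl

theorem lMuCount_unfoldTy {a : Ty} (hg : Guarded 0 a) : lMuCount (unfoldTy a) = lMuCount a :=
  lMuCount_subst a 0 (mu a) hg

end Ty

theorem tyEqF_mono {R R' : Ty → Ty → Prop} (h : ∀ x y, R x y → R' x y) :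
    ∀ x y, TyEqF R x y → TyEqF R' x y := by
  intro x y hxy
  unfold TyEqF at hxy ⊢
  rcases hxy with h1 | h1 | h1 | ⟨a1,a2,b1,b2,e1,e2,r1,r2⟩ | ⟨a1,a2,b1,b2,e1,e2,r1,r2⟩ |
    ⟨a1,a2,b1,b2,e1,e2,r1,r2⟩ | ⟨a',e1,r1⟩ | ⟨b',e1,r1⟩
  · exact Or.inl h1
  · exact Or.inr (Or.inl h1)
  · exact Or.inr (Or.inr (Or.inl h1))
  · exact Or.inr (Or.inr (Or.inr (Or.inl ⟨a1,a2,b1,b2,e1,e2,h _ _ r1,h _ _ r2⟩)))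
  · exact Or.inr (Or.inr (Or.inr (Or.inr (Or.inl ⟨a1,a2,b1,b2,e1,e2,h _ _ r1,h _ _ r2⟩))))
  · exact Or.inr (Or.inr (Or.inr (Or.inr (Or.inr (Or.inl ⟨a1,a2,b1,b2,e1,e2,h _ _ r1,h _ _ r2⟩)))))
  · exact Or.inr (Or.inr (Or.inr (Or.inr (Or.inr (Or.inr (Or.inl ⟨a',e1,h _ _ r1⟩))))))
  · exact Or.inr (Or.inr (Or.inr (Or.inr (Or.inr (Or.inr (Or.inr ⟨b',e1,h _ _ r1⟩))))))

theorem tyEq_destruct {a b : Ty} (h : TyEq a b) : TyEqF TyEq a b := by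
  obtain ⟨R, hR, hab⟩ := h
  exact tyEqF_mono (fun x y hxy => ⟨R, hR, hxy⟩) _ _ (hR _ _ hab)

theorem tyEq_symm {a b : Ty} (h : TyEq a b) : TyEq b a := by
  refine ⟨fun x y => TyEq y x, ?_, h⟩
  intro x y hxy
  have := tyEq_destruct hxy
  unfold TyEqF at this ⊢
  rcases this with ⟨e1,e2⟩ | ⟨e1,e2⟩ | ⟨n,e1,e2⟩ | ⟨a1,a2,b1,b2,e1,e2,r1,r2⟩ |
    ⟨a1,a2,b1,b2,e1,e2,r1,r2⟩ | ⟨a1,a2,b1,b2,e1,e2,r1,r2⟩ | ⟨a',e1,r1⟩ | ⟨b',e1,r1⟩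
  · exact Or.inl ⟨e2, e1⟩
  · exact Or.inr (Or.inl ⟨e2, e1⟩)
  · exact Or.inr (Or.inr (Or.inl ⟨n, e2, e1⟩))
  · exact Or.inr (Or.inr (Or.inr (Or.inl ⟨b1,b2,a1,a2,e2,e1,r1,r2⟩)))
  · exact Or.inr (Or.inr (Or.inr (Or.inr (Or.inl ⟨b1,b2,a1,a2,e2,e1,r1,r2⟩))))
  · exact Or.inr (Or.inr (Or.inr (Or.inr (Or.inr (Or.inl ⟨b1,b2,a1,a2,e2,e1,r1,r2⟩)))))
  · exact Or.inr (Or.inr (Or.inr (Or.inr (Or.inr (Or.inr (Or.inr ⟨a',e1,r1⟩))))))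
  · exact Or.inr (Or.inr (Or.inr (Or.inr (Or.inr (Or.inr (Or.inl ⟨b',e1,r1⟩))))))

theorem tyEq_unfold_left {a b : Ty} (h : TyEq (Ty.mu a) b) : TyEq (Ty.unfoldTy a) b := by
  refine ⟨fun x y => TyEq x y ∨ ∃ c, x = Ty.unfoldTy c ∧ TyEq (Ty.mu c) y, ?_,
    Or.inr ⟨a, rfl, h⟩⟩
  rintro x y (hxy | ⟨c, rfl, hc⟩)
  · exact tyEqF_mono (fun _ _ => Or.inl) _ _ (tyEq_destruct hxy)
  · have hd := tyEq_destruct hc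
    unfold TyEqF at hd
    rcases hd with ⟨e1,e2⟩ | ⟨e1,e2⟩ | ⟨n,e1,e2⟩ | ⟨a1,a2,b1,b2,e1,e2,r1,r2⟩ |
      ⟨a1,a2,b1,b2,e1,e2,r1,r2⟩ | ⟨a1,a2,b1,b2,e1,e2,r1,r2⟩ | ⟨a',e1,r1⟩ | ⟨b',e1,r1⟩
    · exact absurd e1 (by simp)
    · exact absurd e1 (by simp)
    · exact absurd e1 (by simp)
    · exact absurd e1 (by simp)
    · exact absurd e1 (by simp)
    · exact absurd e1 (by simp)
    · obtain rfl : c = a' := by injection e1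
      exact tyEqF_mono (fun _ _ => Or.inl) _ _ (tyEq_destruct r1)
    · exact Or.inr (Or.inr (Or.inr (Or.inr (Or.inr (Or.inr (Or.inr
        ⟨b', e1, Or.inr ⟨c, rfl, r1⟩⟩))))))

theorem tyEq_unfold_right {a b : Ty} (h : TyEq a (Ty.mu b)) : TyEq a (Ty.unfoldTy b) :=
  tyEq_symm (tyEq_unfold_left (tyEq_symm h))

theorem fu_spec : ∀ (m : ℕ) (τ : Ty), Ty.lMuCount τ = m → Ty.Contractive τ → Ty.Closed τ →
    Ty.lMuCount (unfoldMus m τ) = 0 ∧ Ty.Contractive (unfoldMus m τ) ∧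
    Ty.Closed (unfoldMus m τ) ∧ ∀ σ : Ty, TyEq τ σ → TyEq (unfoldMus m τ) σ := by
  intro m
  induction m with
  | zero => intro τ hm hc hcl; exact ⟨hm, hc, hcl, fun σ h => h⟩
  | succ m ih =>
    intro τ hm hc hcl
    cases τ with
    | mu a =>
      have hm' : Ty.lMuCount (Ty.unfoldTy a) = m := by
        rw [Ty.lMuCount_unfoldTy hc.1]
        simpa [Ty.lMuCount] using hm
      have hc' := Ty.contractive_unfoldTy hc hcl
      have hcl' := Ty.closed_unfoldTy hcl
      have heq : unfoldMus (m+1) (Ty.mu a) = unfoldMus m (Ty.unfoldTy a) := rfl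
      rw [heq]
      obtain ⟨h1, h2, h3, h4⟩ := ih (Ty.unfoldTy a) hm' hc' hcl'
      exact ⟨h1, h2, h3, fun σ h => h4 σ (tyEq_unfold_left h)⟩
    | unit => simp [Ty.lMuCount] at hm
    | bool => simp [Ty.lMuCount] at hm
    | arrow a b => simp [Ty.lMuCount] at hm
    | prod a b => simp [Ty.lMuCount] at hm
    | sum a b => simp [Ty.lMuCount] at hm
    | tvar n => simp [Ty.lMuCount] at hm

theorem btTe_eq_aux : ∀ (n : ℕ) (τ σ : Ty), Ty.Contractive τ → Ty.Contractive σ →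
    Ty.Closed τ → Ty.Closed σ → TyEq τ σ → BtTe n τ = BtTe n σ := by
  intro n
  induction n with
  | zero => intros; rfl
  | succ n ih =>
    intro τ σ hcτ hcσ hclτ hclσ h
    obtain ⟨hz1, hc1, hcl1, hty1⟩ := fu_spec (Ty.lMuCount τ) τ rfl hcτ hclτ
    obtain ⟨hz2, hc2, hcl2, hty2⟩ := fu_spec (Ty.lMuCount σ) σ rfl hcσ hclσ
    have h1 : TyEq (unfoldMus (Ty.lMuCount τ) τ) σ := hty1 σ h
    have h2 : TyEq (unfoldMus (Ty.lMuCount σ) σ) (unfoldMus (Ty.lMuCount τ) τ) :=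
      hty2 _ (tyEq_symm h1)
    have hd := tyEq_destruct (tyEq_symm h2)
    unfold TyEqF at hd
    show (match unfoldMus (Ty.lMuCount τ) τ with
      | Ty.unit => Ty.sum Ty.unit Ty.unit
      | Ty.bool => Ty.sum Ty.bool Ty.unit
      | Ty.arrow a b => Ty.sum (Ty.arrow (BtTe n a) (BtTe n b)) Ty.unit
      | Ty.prod a b => Ty.sum (Ty.prod (BtTe n a) (BtTe n b)) Ty.unit
      | Ty.sum a b => Ty.sum (Ty.sum (BtTe n a) (BtTe n b)) Ty.unit
      | Ty.mu _ => Ty.unit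
      | Ty.tvar _ => Ty.unit) =
      (match unfoldMus (Ty.lMuCount σ) σ with
      | Ty.unit => Ty.sum Ty.unit Ty.unit
      | Ty.bool => Ty.sum Ty.bool Ty.unit
      | Ty.arrow a b => Ty.sum (Ty.arrow (BtTe n a) (BtTe n b)) Ty.unit
      | Ty.prod a b => Ty.sum (Ty.prod (BtTe n a) (BtTe n b)) Ty.unit
      | Ty.sum a b => Ty.sum (Ty.sum (BtTe n a) (BtTe n b)) Ty.unit
      | Ty.mu _ => Ty.unit
      | Ty.tvar _ => Ty.unit)
    rcases hd with ⟨e1,e2⟩ | ⟨e1,e2⟩ | ⟨k,e1,e2⟩ | ⟨a1,a2,b1,b2,e1,e2,r1,r2⟩ |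
      ⟨a1,a2,b1,b2,e1,e2,r1,r2⟩ | ⟨a1,a2,b1,b2,e1,e2,r1,r2⟩ | ⟨a',e1,r1⟩ | ⟨b',e1,r1⟩
    · rw [e1, e2]
    · rw [e1, e2]
    · rw [e1] at hcl1; exact absurd hcl1 (by simp [Ty.Closed, Ty.FVBelow])
    · rw [e1] at hc1 hcl1; rw [e2] at hc2 hcl2
      rw [e1, e2]
      simp only
      rw [ih a1 b1 hc1.1 hc2.1 hcl1.1 hcl2.1 r1, ih a2 b2 hc1.2 hc2.2 hcl1.2 hcl2.2 r2]
    · rw [e1] at hc1 hcl1; rw [e2] at hc2 hcl2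
      rw [e1, e2]
      simp only
      rw [ih a1 b1 hc1.1 hc2.1 hcl1.1 hcl2.1 r1, ih a2 b2 hc1.2 hc2.2 hcl1.2 hcl2.2 r2]
    · rw [e1] at hc1 hcl1; rw [e2] at hc2 hcl2
      rw [e1, e2]
      simp only
      rw [ih a1 b1 hc1.1 hc2.1 hcl1.1 hcl2.1 r1, ih a2 b2 hc1.2 hc2.2 hcl1.2 hcl2.2 r2]
    · rw [e1] at hz1; simp [Ty.lMuCount] at hz1
    · rw [e1] at hz2; simp [Ty.lMuCount] at hz2

/-- coinductively equal types have identical backtranslation types. -/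
theorem tyEq_btTe_eq (τ σ : Ty) (hcτ : Ty.Contractive τ) (hcσ : Ty.Contractive σ)
    (hclτ : Ty.Closed τ) (hclσ : Ty.Closed σ) (h : TyEq τ σ) :
    ∀ n : ℕ, BtTe n τ = BtTe n σ := by
  exact fun n => btTe_eq_aux n τ σ hcτ hcσ hclτ hclσ h
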